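/- For every integer m ≥ 1, the function x ↦ J_m'(x)/J_m(x) is strictly decreasing on the open interval (0, j_{m,1}); in particular its derivative is ≤ 0 there. -/

import Mathlib

open MeasureTheory Filter Set

/-- The Bessel function of the first kind of order `ν`:
`J_ν(x) = ∑ₖ (-1)^k / (k! Γ(ν+k+1)) (x/2)^(2k+ν)`. -/
noncomputable def besselJ (ν : ℝ) (x : ℝ) : ℝ :=
  ∑' k : ℕ, ((-1 : ℝ) ^ k / ((k.factorial : ℝ) * Real.Gamma (ν + (k : ℝ) + 1))) *
    (x / 2) ^ (2 * (k : ℝ) + ν)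

/-- The derivative `J_ν'` of the Bessel function. -/
noncomputable def besselJDeriv (ν : ℝ) (x : ℝ) : ℝ := deriv (besselJ ν) x

/-- `besselJZero ν s` is the `s`-th positive zero of `J_ν` (for `s ≥ 1`),
listed in increasing order. -/
noncomputable def besselJZero (ν : ℝ) : ℕ → ℝ
  | 0 => 0
  | s + 1 => sInf {x : ℝ | besselJZero ν s < x ∧ besselJ ν x = 0}

/-- `besselJPrimeZero ν s` is the `s`-th positive zero of `J_ν'` (for `s ≥ 1`),
listed in increasing order. -/
noncomputable def besselJPrimeZero (ν : ℝ) : ℕ → ℝ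
  | 0 => 0
  | s + 1 => sInf {x : ℝ | besselJPrimeZero ν s < x ∧ besselJDeriv ν x = 0}

/-!
Write `J_m(x) = (x/2)^m h_m((x/2)^2)` with the entire series
`h_m(y) = ∑ (-1)^k y^k / (k! (m+k)!)`, which satisfies `h_m' = -h_{m+1}` and
`h_m = (m+1) h_{m+1} - y h_{m+2}`. From these, `u = x J_m'/J_m` (analytic up to `x = 0`, where
`u = m`) solves the Riccati equation `x u' = m^2 - x^2 - u^2`, and
`x^2 (J_m'/J_m)' = x u' - u = -g` with `g = u^2 + u + x^2 - m^2`. Now `g(0) = m > 0`, and at a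
zero of `g` the Riccati equation gives `x g' = u^2 + m^2 + x^2 > 0`, so `g` cannot reach `0`
before the first zero of `J_m`.
-/

open scoped Nat

section FactorialDecay

variable {a : ℕ → ℝ} {C : ℝ}

lemma summable_mul_pow_of_abs_le_div_factorial (ha : ∀ k, |a k| ≤ C / k !) (y : ℝ) :
    Summable fun k => a k * y ^ k := by
  refine .of_norm_bounded (g := fun k => C * |y| ^ k / k !) ?_ fun k => ?_
  · simpa only [mul_div_assoc] using (Real.summable_pow_div_factorial |y|).mul_left C
  · rw [Real.norm_eq_abs, abs_mul, abs_pow, mul_div_right_comm]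
    exact mul_le_mul_of_nonneg_right (ha k) (by positivity)

lemma abs_succ_mul_le_div_factorial (ha : ∀ k, |a k| ≤ C / k !) (k : ℕ) :
    |(k + 1) * a (k + 1)| ≤ C / k ! := by
  have hk : (0 : ℝ) < k + 1 := by positivity
  calc |(k + 1) * a (k + 1)| ≤ (k + 1) * (C / (k + 1) !) := by
        rw [abs_mul, abs_of_pos hk]; exact mul_le_mul_of_nonneg_left (ha _) hk.le
    _ = C / k ! := by rw [Nat.factorial_succ]; push_cast; field_simp

lemma hasDerivAt_tsum_mul_pow_of_abs_le_div_factorial (ha : ∀ k, |a k| ≤ C / k !) (y : ℝ) :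
    HasDerivAt (fun y => ∑' k, a k * y ^ k) (∑' k, (k + 1) * a (k + 1) * y ^ k) y := by
  have hshift :
      (fun y => ∑' k, a k * y ^ k) = fun y => a 0 + ∑' k, a (k + 1) * y ^ (k + 1) := by
    funext y
    simp [(summable_mul_pow_of_abs_le_div_factorial ha y).tsum_eq_zero_add]
  rw [hshift]
  refine .const_add _ (hasDerivAt_tsum_of_isPreconnected (t := Metric.ball (0 : ℝ) (|y| + 1))
    (y₀ := 0) (y := y) (g := fun k z => a (k + 1) * z ^ (k + 1))
    (g' := fun k z => (k + 1) * a (k + 1) * z ^ k) (u := fun k => C * (|y| + 1) ^ k / k !)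
    ?_ Metric.isOpen_ball (convex_ball _ _).isPreconnected
    (fun k z _ => ?_) (fun k z hz => ?_) (Metric.mem_ball_self (by positivity))
    ?_ (by simp))
  · simpa only [mul_div_assoc] using (Real.summable_pow_div_factorial _).mul_left C
  · exact ((hasDerivAt_pow (k + 1) z).const_mul (a (k + 1))).congr_deriv
      (by rw [Nat.add_sub_cancel]; push_cast; ring)
  · rw [mem_ball_zero_iff, Real.norm_eq_abs] at hz
    rw [Real.norm_eq_abs, abs_mul, abs_pow, mul_div_right_comm]
    exact mul_le_mul (abs_succ_mul_le_div_factorial ha k)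
      (pow_le_pow_left₀ (abs_nonneg z) hz.le k) (by positivity)
      ((abs_nonneg _).trans (abs_succ_mul_le_div_factorial ha k))
  · simp

end FactorialDecay

lemma pos_of_hasDerivAt_pos_of_eq_zero {g g' : ℝ → ℝ} {a b : ℝ}
    (hg : ∀ x ∈ Ico a b, HasDerivAt g (g' x) x) (ha : 0 < g a)
    (hzero : ∀ x ∈ Ioo a b, g x = 0 → 0 < g' x) : ∀ x ∈ Ico a b, 0 < g x := by
  have hnonneg : ∀ x ∈ Ico a b, 0 ≤ g x := by
    intro x hx
    have hsub : Icc a x ⊆ Ico a b := Icc_subset_Ico_right hx.2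
    have := image_le_of_deriv_right_lt_deriv_boundary' (f := fun x => -g x) (f' := fun x => -g' x)
      (B := 0) (B' := 0) (fun y hy => (hg y (hsub hy)).continuousAt.neg.continuousWithinAt)
      (fun y hy => (hg y (hsub (Ico_subset_Icc_self hy))).neg.hasDerivWithinAt)
      (by simpa using ha.le) continuousOn_const (fun _ _ => hasDerivWithinAt_const _ _ _)
      (fun y hy hgy => ?_) (right_mem_Icc.2 hx.1)
    · simpa using this
    · rcases hy.1.eq_or_lt with rfl | hay
      · simp only [Pi.zero_apply, neg_eq_zero] at hgy; linarith
      · simpa using hzero y ⟨hay, hy.2.trans_le hx.2.le⟩ (by simpa using hgy)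
  intro x hx
  refine (hnonneg x hx).lt_of_ne' fun hgx => ?_
  rcases hx.1.eq_or_lt with rfl | hax
  · exact ha.ne' hgx
  have hmin : IsLocalMin g x := Filter.mem_of_superset (Ioo_mem_nhds hax hx.2)
    fun y hy => hgx ▸ hnonneg y (Ioo_subset_Ico_self hy)
  exact (hzero x ⟨hax, hx.2⟩ hgx).ne' (hmin.hasDerivAt_eq_zero (hg x hx))

lemma riccati_sq_add_add_sq_sub_sq_pos {u : ℝ → ℝ} {m b : ℝ} (hm : 0 < m)
    (hu : ∀ x ∈ Ico 0 b, DifferentiableAt ℝ u x) (hu0 : u 0 = m)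
    (hric : ∀ x ∈ Ioo 0 b, x * deriv u x = m ^ 2 - x ^ 2 - u x ^ 2) :
    ∀ x ∈ Ico 0 b, 0 < u x ^ 2 + u x + x ^ 2 - m ^ 2 := by
  have hg : ∀ x ∈ Ico 0 b, HasDerivAt (fun x => u x ^ 2 + u x + x ^ 2 - m ^ 2)
      ((2 * u x + 1) * deriv u x + 2 * x) x := fun x hx =>
    ((((hu x hx).hasDerivAt.pow 2).add (hu x hx).hasDerivAt).add (hasDerivAt_pow 2 x)).sub_const _
      |>.congr_deriv (by simp only [Nat.cast_ofNat, Nat.add_one_sub_one, pow_one]; ring)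
  refine pos_of_hasDerivAt_pos_of_eq_zero hg (by simp [hu0, hm]) fun x hx hx0 => ?_
  -- at a zero `x u' = u`, so that `x g' = u² + m² + x²`
  have hxu : x * deriv u x = u x := by linarith [hric x hx]
  have : x * ((2 * u x + 1) * deriv u x + 2 * x) = u x ^ 2 + m ^ 2 + x ^ 2 := by
    linear_combination (2 * u x + 1) * hxu + hx0
  exact pos_of_mul_pos_right (this ▸ by positivity) hx.1.le

noncomputable def besselCoeff (m k : ℕ) : ℝ := (-1) ^ k / (k ! * (m + k) !)

noncomputable def besselSeries (m : ℕ) (y : ℝ) : ℝ := ∑' k, besselCoeff m k * y ^ k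

lemma abs_besselCoeff_le (m k : ℕ) : |besselCoeff m k| ≤ 1 / k ! := by
  rw [besselCoeff, abs_div, abs_pow, abs_neg, abs_one, one_pow, abs_of_pos (by positivity)]
  gcongr
  exact le_mul_of_one_le_right (by positivity) (by exact_mod_cast (m + k).factorial_pos)

lemma succ_mul_besselCoeff_succ (m k : ℕ) :
    (k + 1) * besselCoeff m (k + 1) = -besselCoeff (m + 1) k := by
  simp only [besselCoeff, Nat.factorial_succ, show m + (k + 1) = m + 1 + k by ring]
  push_cast
  field_simp
  ring

lemma besselCoeff_succ_sub (m k : ℕ) :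
    besselCoeff m (k + 1) - (m + 1) * besselCoeff (m + 1) (k + 1) = -besselCoeff (m + 2) k := by
  simp only [besselCoeff, Nat.factorial_succ, show m + (k + 1) = m + k + 1 by ring,
    show m + 1 + (k + 1) = m + k + 1 + 1 by ring, show m + 2 + k = m + k + 1 + 1 by ring]
  push_cast
  field_simp
  ring

lemma summable_besselCoeff_mul_pow (m : ℕ) (y : ℝ) :
    Summable fun k => besselCoeff m k * y ^ k :=
  summable_mul_pow_of_abs_le_div_factorial (abs_besselCoeff_le m) y

lemma hasDerivAt_besselSeries (m : ℕ) (y : ℝ) :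
    HasDerivAt (besselSeries m) (-besselSeries (m + 1) y) y := by
  refine (hasDerivAt_tsum_mul_pow_of_abs_le_div_factorial (abs_besselCoeff_le m) y).congr_deriv ?_
  simp only [besselSeries, succ_mul_besselCoeff_succ, neg_mul, tsum_neg]

lemma besselSeries_eq_add_one_mul_sub (m : ℕ) (y : ℝ) :
    besselSeries m y = (m + 1) * besselSeries (m + 1) y - y * besselSeries (m + 2) y := by
  have hs₀ := summable_besselCoeff_mul_pow m y
  have hs₁ := (summable_besselCoeff_mul_pow (m + 1) y).mul_left ((m : ℝ) + 1)
  have hs : Summable fun k => (besselCoeff m k - (m + 1) * besselCoeff (m + 1) k) * y ^ k := by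
    simpa only [sub_mul, mul_assoc] using hs₀.sub hs₁
  have h0 : besselCoeff m 0 - (m + 1) * besselCoeff (m + 1) 0 = 0 := by
    rw [sub_eq_zero, besselCoeff, besselCoeff, Nat.add_zero, Nat.add_zero, Nat.factorial_succ]
    push_cast; field_simp
  suffices besselSeries m y - (m + 1) * besselSeries (m + 1) y = -y * besselSeries (m + 2) y by
    linarith
  calc besselSeries m y - (m + 1) * besselSeries (m + 1) y
      = ∑' k, (besselCoeff m k - (m + 1) * besselCoeff (m + 1) k) * y ^ k := by
        rw [besselSeries, besselSeries, ← tsum_mul_left, ← hs₀.tsum_sub hs₁]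
        exact tsum_congr fun k => by ring
    _ = ∑' k, (besselCoeff m (k + 1) - (m + 1) * besselCoeff (m + 1) (k + 1)) * y ^ (k + 1) := by
        rw [hs.tsum_eq_zero_add, h0, zero_mul, zero_add]
    _ = -y * besselSeries (m + 2) y := by
        rw [besselSeries, ← tsum_mul_left]
        exact tsum_congr fun k => by rw [besselCoeff_succ_sub]; ring

lemma besselSeries_zero (m : ℕ) : besselSeries m 0 = 1 / m ! := by
  rw [besselSeries, tsum_eq_single 0 fun k hk => by simp [hk]]
  simp [besselCoeff]

lemma besselJ_eq_mul_besselSeries (m : ℕ) (x : ℝ) :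
    besselJ m x = (x / 2) ^ m * besselSeries m ((x / 2) ^ 2) := by
  rw [besselJ, besselSeries, ← tsum_mul_left]
  refine tsum_congr fun k => ?_
  rw [show 2 * (k : ℝ) + m = ((2 * k + m : ℕ) : ℝ) by push_cast; ring, Real.rpow_natCast,
    show (m : ℝ) + k + 1 = ((m + k : ℕ) : ℝ) + 1 by push_cast; ring,
    Real.Gamma_nat_eq_factorial, besselCoeff, pow_add, pow_mul]
  ring

lemma besselJ_ne_zero_of_mem_Ioo {ν x : ℝ} (hx : x ∈ Ioo 0 (besselJZero ν 1)) :
    besselJ ν x ≠ 0 := fun h =>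
  hx.2.not_ge (csInf_le ⟨0, fun _ hy => hy.1.le⟩ ⟨hx.1, h⟩)

lemma hasDerivAt_besselSeries_sq (m : ℕ) (x : ℝ) :
    HasDerivAt (fun x => besselSeries m ((x / 2) ^ 2))
      (-(x / 2) * besselSeries (m + 1) ((x / 2) ^ 2)) x :=
  ((hasDerivAt_besselSeries m _).comp x (((hasDerivAt_id' x).div_const 2).fun_pow 2)).congr_deriv
    (by simp only [Nat.cast_ofNat, Nat.add_one_sub_one, pow_one]; ring)

lemma besselSeries_sq_pos (m : ℕ) {x : ℝ} (hx : x ∈ Ico 0 (besselJZero m 1)) :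
    0 < besselSeries m ((x / 2) ^ 2) := by
  have hcont : Continuous fun x : ℝ => besselSeries m ((x / 2) ^ 2) :=
    continuous_iff_continuousAt.2 fun x => (hasDerivAt_besselSeries_sq m x).continuousAt
  have h0 : 0 < besselSeries m ((0 / 2) ^ 2) := by
    rw [zero_div, zero_pow two_ne_zero, besselSeries_zero]; positivity
  by_contra! hle
  obtain ⟨y, hy, hy0⟩ := intermediate_value_Icc' hx.1 hcont.continuousOn ⟨hle, h0.le⟩
  rcases hy.1.eq_or_lt with rfl | hy'
  · exact h0.ne' hy0
  · exact besselJ_ne_zero_of_mem_Ioo ⟨hy', hy.2.trans_lt hx.2⟩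
      (by rw [besselJ_eq_mul_besselSeries, show besselSeries m _ = 0 from hy0, mul_zero])

/-- `x J_m'(x) / J_m(x)`, continued to `x = 0` through the power series. -/
noncomputable def xLogDerivBesselJ (m : ℕ) (x : ℝ) : ℝ :=
  m - x ^ 2 / 2 * besselSeries (m + 1) ((x / 2) ^ 2) / besselSeries m ((x / 2) ^ 2)

lemma besselJDeriv_div_besselJ (m : ℕ) {x : ℝ} (hx : x ≠ 0)
    (hP : besselSeries m ((x / 2) ^ 2) ≠ 0) :
    besselJDeriv m x / besselJ m x = xLogDerivBesselJ m x / x := by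
  have hJ : besselJ m = fun x => (x / 2) ^ m * besselSeries m ((x / 2) ^ 2) :=
    funext (besselJ_eq_mul_besselSeries m)
  rw [besselJDeriv, hJ, (((hasDerivAt_id' x).div_const 2).fun_pow m |>.fun_mul
    (hasDerivAt_besselSeries_sq m x)).deriv, xLogDerivBesselJ]
  dsimp only
  generalize besselSeries m ((x / 2) ^ 2) = P at hP ⊢
  generalize besselSeries (m + 1) ((x / 2) ^ 2) = Q
  rcases m with _ | n
  · field_simp
    ring
  · rw [Nat.add_sub_cancel]
    field_simp
    ring

lemma differentiableAt_xLogDerivBesselJ (m : ℕ) {x : ℝ}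
    (hP : besselSeries m ((x / 2) ^ 2) ≠ 0) :
    DifferentiableAt ℝ (xLogDerivBesselJ m) x :=
  (differentiableAt_const _).sub ((((differentiableAt_pow 2).div_const 2).mul
    (hasDerivAt_besselSeries_sq (m + 1) x).differentiableAt).div
    (hasDerivAt_besselSeries_sq m x).differentiableAt hP)

lemma mul_deriv_xLogDerivBesselJ (m : ℕ) {x : ℝ} (hP : besselSeries m ((x / 2) ^ 2) ≠ 0) :
    x * deriv (xLogDerivBesselJ m) x = m ^ 2 - x ^ 2 - xLogDerivBesselJ m x ^ 2 := by
  have hu : HasDerivAt (xLogDerivBesselJ m) _ x :=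
    (hasDerivAt_const x (m : ℝ)).fun_sub ((((hasDerivAt_pow 2 x).div_const 2).fun_mul
      (hasDerivAt_besselSeries_sq (m + 1) x)).fun_div (hasDerivAt_besselSeries_sq m x) hP)
  have hrec := besselSeries_eq_add_one_mul_sub m ((x / 2) ^ 2)
  rw [hu.deriv, xLogDerivBesselJ]
  generalize besselSeries m ((x / 2) ^ 2) = P at hP hrec ⊢
  generalize besselSeries (m + 1) ((x / 2) ^ 2) = Q at hrec ⊢
  generalize besselSeries (m + 2) ((x / 2) ^ 2) = T at hrec ⊢
  field_simp
  linear_combination 4 * x ^ 2 * P * hrec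

lemma xLogDerivBesselJ_sq_add_add_sq_sub_sq_pos (m : ℕ) (hm : 1 ≤ m) {x : ℝ}
    (hx : x ∈ Ico 0 (besselJZero m 1)) :
    0 < xLogDerivBesselJ m x ^ 2 + xLogDerivBesselJ m x + x ^ 2 - m ^ 2 :=
  riccati_sq_add_add_sq_sub_sq_pos (by exact_mod_cast hm)
    (fun _ hy => differentiableAt_xLogDerivBesselJ m (besselSeries_sq_pos m hy).ne')
    (by simp [xLogDerivBesselJ])
    (fun _ hy => mul_deriv_xLogDerivBesselJ m (besselSeries_sq_pos m (Ioo_subset_Ico_self hy)).ne')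
    x hx

lemma hasDerivAt_besselJDeriv_div_besselJ (m : ℕ) {x : ℝ} (hx : x ∈ Ioo 0 (besselJZero m 1)) :
    HasDerivAt (fun x => besselJDeriv m x / besselJ m x)
      (-(xLogDerivBesselJ m x ^ 2 + xLogDerivBesselJ m x + x ^ 2 - m ^ 2) / x ^ 2) x := by
  have hP : ∀ y ∈ Ioo 0 (besselJZero m 1), besselSeries m ((y / 2) ^ 2) ≠ 0 :=
    fun y hy => (besselSeries_sq_pos m (Ioo_subset_Ico_self hy)).ne'
  have hu := (differentiableAt_xLogDerivBesselJ m (hP x hx)).hasDerivAt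
  refine (hu.fun_div (hasDerivAt_id' x) hx.1.ne').congr_of_eventuallyEq ?_ |>.congr_deriv ?_
  · filter_upwards [isOpen_Ioo.mem_nhds hx] with y hy
    exact besselJDeriv_div_besselJ m hy.1.ne' (hP y hy)
  · rw [mul_one, mul_comm, mul_deriv_xLogDerivBesselJ m (hP x hx)]
    ring

/-- For every integer `m ≥ 1`, `x ↦ J_m'(x)/J_m(x)` is strictly decreasing on
`(0, j_{m,1})`; in particular its derivative is `≤ 0` there. -/
theorem stmt2 (m : ℕ) (hm : 1 ≤ m) :
    StrictAntiOn (fun x : ℝ => besselJDeriv m x / besselJ m x)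
      (Set.Ioo 0 (besselJZero m 1)) ∧
    ∀ x ∈ Set.Ioo (0:ℝ) (besselJZero m 1),
      deriv (fun x : ℝ => besselJDeriv m x / besselJ m x) x ≤ 0 := by
  have hderiv : ∀ x ∈ Ioo 0 (besselJZero m 1),
      deriv (fun x : ℝ => besselJDeriv m x / besselJ m x) x < 0 := fun x hx => by
    rw [(hasDerivAt_besselJDeriv_div_besselJ m hx).deriv]
    exact div_neg_of_neg_of_pos
      (neg_neg_of_pos (xLogDerivBesselJ_sq_add_add_sq_sub_sq_pos m hm (Ioo_subset_Ico_self hx)))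
      (pow_pos hx.1 2)
  refine ⟨strictAntiOn_of_deriv_neg (convex_Ioo _ _) (fun x hx => ?_) (by rwa [interior_Ioo]),
    fun x hx => (hderiv x hx).le⟩
  exact (hasDerivAt_besselJDeriv_div_besselJ m hx).continuousAt.continuousWithinAt
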